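/- arXiv:2601.20440 — 4 statements merged into one kernel-verified Lean document; each statement's English description precedes it below -/
import Mathlib

section
/- Let r > 0, λ > 0, γ > 0, ε > 0 be fixed and let a_ε : ℝ → ℝ be continuous with ∫_ℝ |a_ε| < ∞. A continuous function k_ε : [−r,r] → ℝ which is twice continuously differentiable on [−r,0] and on [0,r] separately (with one-sided derivatives at the endpoints and at 0) satisfies the Sturm–Liouville problem (1/2)k_ε'' + a_ε k_ε' = λ k_ε on [−r,0] and on [0,r], together with k_ε(−r) = 1, k_ε'(−r) = 0 and the transmission condition k_ε'(0+) = γ k_ε'(0−), if and only if k_ε(x) = 1 + 2λ ∫_{−r}^x ∫_{−r}^y V_ε(y,z) k_ε(z) dz dy for all x ∈ [−r,r], where V_ε(y,z) := exp(−2∫_z^y a_ε(u) du)·(γ·[yz < 0] + [yz ≥ 0]) and [·] denotes the Iverson bracket. -/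
open MeasureTheory Set Filter Topology Real

/-- The kernel `V_ε(y,z) = exp(−2∫_z^y a)·(γ·[yz<0] + [yz≥0])`. -/
noncomputable def Vker (γ : ℝ) (a : ℝ → ℝ) (y z : ℝ) : ℝ :=
  Real.exp (-2 * ∫ u in z..y, a u) *
    (γ * (if y * z < 0 then 1 else 0) + (if 0 ≤ y * z then 1 else 0))

/-!
With `A' = a`, the integrating factor `e^{2A}` turns `(1/2)k'' + a k' = λk` into
`(e^{2A}k')' = 2λe^{2A}k`, so on each half-interval `[c, d]` the problem is equivalent to
`k(x) = k(c) + ∫_c^x e^{-2A(y)}(F + 2λ∫_c^y e^{2A}k) dy`, where `F = e^{2A(c)}k'(c)` is the flux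
at `c`. On `[-r, 0]` the flux is `0`; on `[0, r]` the transmission condition makes it `γ` times the
flux `2λ∫_{-r}^0 e^{2A}k` that arrives at `0` from the left, and this is exactly what the weight
`γ` of `Vker` on `{yz < 0}` produces. Gluing the two halves gives the integral equation.
-/

section Calculus

variable {c d x : ℝ} {f f' f'' : ℝ → ℝ}

theorem hasDerivWithinAt_integral_Icc (hf : ContinuousOn f (Icc c d)) (hx : x ∈ Icc c d) :
    HasDerivWithinAt (fun u => ∫ t in c..u, f t) (f x) (Icc c d) x := by
  -- selects the `FTCFilter` instance for `𝓝[Icc c d] x`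
  have : Fact (x ∈ Icc c d) := ⟨hx⟩
  exact intervalIntegral.integral_hasDerivWithinAt_right
    (hf.mono (uIcc_subset_Icc (left_mem_Icc.2 (hx.1.trans hx.2)) hx)).intervalIntegrable
    (hf.stronglyMeasurableAtFilter_nhdsWithin measurableSet_Icc x) (hf x hx)

theorem eq_add_integral_of_hasDerivWithinAt
    (hf : ∀ y ∈ Icc c d, HasDerivWithinAt f (f' y) (Icc c d) y)
    (hf' : ContinuousOn f' (Icc c d)) (hx : x ∈ Icc c d) :
    f x = f c + ∫ y in c..x, f' y := by
  have hsub : Icc c x ⊆ Icc c d := Icc_subset_Icc le_rfl hx.2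
  rw [intervalIntegral.integral_eq_sub_of_hasDerivAt_of_le hx.1
    (fun y hy => (hf y (hsub hy)).continuousWithinAt.mono hsub)
    (fun y hy => (hf y (hsub (Ioo_subset_Icc_self hy))).hasDerivAt
      (Icc_mem_nhds hy.1 (hy.2.trans_le hx.2)))
    ((hf'.mono hsub).intervalIntegrable_of_Icc hx.1)]
  ring

theorem hasDerivWithinAt_of_eq_add_integral (hf' : ContinuousOn f' (Icc c d))
    (hf : ∀ y ∈ Icc c d, f y = f c + ∫ t in c..y, f' t) (hx : x ∈ Icc c d) :
    HasDerivWithinAt f (f' x) (Icc c d) x :=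
  ((hasDerivWithinAt_integral_Icc hf' hx).const_add (f c)).congr hf (hf x hx)

theorem contDiffOn_two_of_hasDerivWithinAt {s : Set ℝ} (hs : UniqueDiffOn ℝ s)
    (hf : ∀ x ∈ s, HasDerivWithinAt f (f' x) s x)
    (hf' : ∀ x ∈ s, HasDerivWithinAt f' (f'' x) s x) (hf'' : ContinuousOn f'' s) :
    ContDiffOn ℝ 2 f s := by
  rw [show (2 : WithTop ℕ∞) = 1 + 1 from rfl, contDiffOn_succ_iff_derivWithin hs]
  refine ⟨fun x hx => (hf x hx).differentiableWithinAt, by simp, ?_⟩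
  rw [contDiffOn_congr fun x hx => (hf x hx).derivWithin (hs x hx),
    contDiffOn_one_iff_derivWithin hs]
  exact ⟨fun x hx => (hf' x hx).differentiableWithinAt,
    hf''.congr fun x hx => (hf' x hx).derivWithin (hs x hx)⟩

end Calculus

noncomputable def slDeriv (A k : ℝ → ℝ) (lam c C y : ℝ) : ℝ :=
  exp (-2 * A y) * (C + 2 * lam * ∫ z in c..y, exp (2 * A z) * k z)

section SturmLiouville

variable {a A k : ℝ → ℝ} {lam c d C x : ℝ}

theorem continuousOn_exp_mul_of_hasDerivAt {s : Set ℝ} (hA : ∀ y, HasDerivAt A (a y) y)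
    (hk : ContinuousOn k s) : ContinuousOn (fun z => exp (2 * A z) * k z) s :=
  ((Differentiable.continuous fun y => (hA y).differentiableAt).const_smul (2 : ℝ)).rexp
    |>.continuousOn.mul hk

theorem hasDerivWithinAt_slDeriv (hA : ∀ y, HasDerivAt A (a y) y)
    (hk : ContinuousOn k (Icc c d)) (hx : x ∈ Icc c d) :
    HasDerivWithinAt (slDeriv A k lam c C)
      (-2 * a x * slDeriv A k lam c C x + 2 * lam * k x) (Icc c d) x := by
  have h := (((hA x).const_mul (-2)).exp.hasDerivWithinAt (s := Icc c d)).mul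
    (((hasDerivWithinAt_integral_Icc (continuousOn_exp_mul_of_hasDerivAt hA hk) hx).const_mul
      (2 * lam)).const_add C)
  refine h.congr_deriv ?_
  have : exp (-2 * A x) * exp (2 * A x) = 1 := by rw [← exp_add]; simp
  simp only [slDeriv]
  linear_combination 2 * lam * k x * this

theorem continuousOn_slDeriv (hA : ∀ y, HasDerivAt A (a y) y)
    (hk : ContinuousOn k (Icc c d)) : ContinuousOn (slDeriv A k lam c C) (Icc c d) :=
  fun _ hx => (hasDerivWithinAt_slDeriv hA hk hx).continuousWithinAt

theorem derivWithin_eq_slDeriv (hcd : c < d) (hA : ∀ y, HasDerivAt A (a y) y)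
    (hk : ContinuousOn k (Icc c d))
    (hint : ∀ x ∈ Icc c d, k x = k c + ∫ y in c..x, slDeriv A k lam c C y) (hx : x ∈ Icc c d) :
    derivWithin k (Icc c d) x = slDeriv A k lam c C x :=
  (hasDerivWithinAt_of_eq_add_integral (continuousOn_slDeriv hA hk) hint hx).derivWithin
    (uniqueDiffOn_Icc hcd x hx)

theorem sturmLiouville_Icc_iff (hcd : c < d) (ha : Continuous a)
    (hA : ∀ y, HasDerivAt A (a y) y) (hk : ContinuousOn k (Icc c d)) :
    (ContDiffOn ℝ 2 k (Icc c d) ∧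
      (∀ x ∈ Icc c d, (1/2) * derivWithin (derivWithin k (Icc c d)) (Icc c d) x
        + a x * derivWithin k (Icc c d) x = lam * k x) ∧
      derivWithin k (Icc c d) c = exp (-2 * A c) * C) ↔
    ∀ x ∈ Icc c d, k x = k c + ∫ y in c..x, slDeriv A k lam c C y := by
  have hs : UniqueDiffOn ℝ (Icc c d) := uniqueDiffOn_Icc hcd
  have hG := continuousOn_slDeriv (lam := lam) (C := C) hA hk
  constructor
  · rintro ⟨hk2, hode, hk'c⟩
    set k' := derivWithin k (Icc c d)
    have hk' : ∀ x ∈ Icc c d, HasDerivWithinAt k (k' x) (Icc c d) x :=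
      fun x hx => (hk2.differentiableOn (by norm_num) x hx).hasDerivWithinAt
    have hk'' : ∀ x ∈ Icc c d, HasDerivWithinAt k' (derivWithin k' (Icc c d) x) (Icc c d) x :=
      fun x hx => ((hk2.derivWithin hs (by norm_num : (1 : WithTop ℕ∞) + 1 ≤ 2)).differentiableOn
        one_ne_zero x hx).hasDerivWithinAt
    have hflux : ∀ x ∈ Icc c d,
        exp (2 * A x) * k' x = C + 2 * lam * ∫ z in c..x, exp (2 * A z) * k z := by
      intro x hx
      have hderiv : ∀ y ∈ Icc c d, HasDerivWithinAt (fun y => exp (2 * A y) * k' y)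
          (2 * lam * (exp (2 * A y) * k y)) (Icc c d) y := fun y hy =>
        (((hA y).const_mul 2).exp.hasDerivWithinAt.mul (hk'' y hy)).congr_deriv
          (by linear_combination 2 * exp (2 * A y) * hode y hy)
      rw [eq_add_integral_of_hasDerivWithinAt hderiv
        (continuousOn_const.mul (continuousOn_exp_mul_of_hasDerivAt hA hk)) hx, hk'c,
        intervalIntegral.integral_const_mul, ← mul_assoc, ← exp_add]
      simp
    have hk'eq : ∀ x ∈ Icc c d, HasDerivWithinAt k (slDeriv A k lam c C x) (Icc c d) x := by
      intro x hx
      convert hk' x hx using 1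
      rw [slDeriv, ← hflux x hx, ← mul_assoc, ← exp_add]
      simp
    exact fun x hx => eq_add_integral_of_hasDerivWithinAt hk'eq hG hx
  · intro hint
    have hk' : ∀ x ∈ Icc c d, HasDerivWithinAt k (slDeriv A k lam c C x) (Icc c d) x :=
      fun x hx => hasDerivWithinAt_of_eq_add_integral hG hint hx
    have hk'eq : EqOn (derivWithin k (Icc c d)) (slDeriv A k lam c C) (Icc c d) :=
      fun x hx => derivWithin_eq_slDeriv hcd hA hk hint hx
    refine ⟨contDiffOn_two_of_hasDerivWithinAt hs hk' (fun _ hx => hasDerivWithinAt_slDeriv hA hk hx)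
      ((continuous_const.mul ha).continuousOn.mul hG |>.add (continuousOn_const.mul hk)),
      fun x hx => ?_, ?_⟩
    · rw [derivWithin_congr hk'eq (hk'eq hx),
        (hasDerivWithinAt_slDeriv hA hk hx).derivWithin (hs x hx), hk'eq hx]
      ring
    · rw [hk'eq (left_mem_Icc.2 hcd.le), slDeriv, intervalIntegral.integral_same]
      ring

end SturmLiouville

section Kernel

variable {a A k : ℝ → ℝ} {γ c y z : ℝ}

theorem Vker_eq_exp_mul (ha : Continuous a) (hA : ∀ y, HasDerivAt A (a y) y) :
    Vker γ a y z = exp (-2 * A y) * exp (2 * A z) * (if y * z < 0 then γ else 1) := by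
  have hexp : exp (-2 * (A y - A z)) = exp (-2 * A y) * exp (2 * A z) := by
    rw [← exp_add]; ring_nf
  rw [Vker, intervalIntegral.integral_eq_sub_of_hasDerivAt (fun x _ => hA x)
    (ha.intervalIntegrable _ _), hexp]
  rcases lt_or_ge (y * z) 0 with h | h
  · rw [if_pos h, if_neg h.not_ge, if_pos h]; ring
  · rw [if_neg h.not_gt, if_pos h, if_neg h.not_gt]; ring

theorem integral_Vker_mul_of_nonpos (ha : Continuous a) (hA : ∀ y, HasDerivAt A (a y) y)
    (hc : c ≤ 0) (hy : y ≤ 0) :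
    ∫ z in c..y, Vker γ a y z * k z = exp (-2 * A y) * ∫ z in c..y, exp (2 * A z) * k z := by
  rw [← intervalIntegral.integral_const_mul]
  refine intervalIntegral.integral_congr fun z hz => ?_
  have hz0 : z ≤ 0 := hz.2.trans (max_le hc hy)
  rw [Vker_eq_exp_mul ha hA, if_neg (by nlinarith)]
  ring

theorem integral_Vker_mul_of_pos (ha : Continuous a) (hA : ∀ y, HasDerivAt A (a y) y)
    (hc : c ≤ 0) (hy : 0 < y) (hk : ContinuousOn k (Icc c y)) :
    ∫ z in c..y, Vker γ a y z * k z = exp (-2 * A y) *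
      (γ * (∫ z in c..0, exp (2 * A z) * k z) + ∫ z in (0 : ℝ)..y, exp (2 * A z) * k z) := by
  have hE : ContinuousOn (fun z => exp (-2 * A y) * (exp (2 * A z) * k z)) (Icc c y) :=
    continuousOn_const.mul (continuousOn_exp_mul_of_hasDerivAt hA hk)
  have hleft : EqOn (fun z => γ * (exp (-2 * A y) * (exp (2 * A z) * k z)))
      (fun z => Vker γ a y z * k z) (uIoo c 0) := by
    intro z hz
    rw [uIoo_of_le hc] at hz
    dsimp only
    rw [Vker_eq_exp_mul ha hA, if_pos (mul_neg_of_pos_of_neg hy hz.2)]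
    ring
  have hright : EqOn (fun z => exp (-2 * A y) * (exp (2 * A z) * k z))
      (fun z => Vker γ a y z * k z) (uIcc 0 y) := by
    intro z hz
    rw [uIcc_of_le hy.le] at hz
    dsimp only
    rw [Vker_eq_exp_mul ha hA, if_neg (not_lt.2 (mul_nonneg hy.le hz.1))]
    ring
  rw [← intervalIntegral.integral_add_adjacent_intervals (b := 0)
    (((hE.mono (Icc_subset_Icc le_rfl hy.le)).intervalIntegrable_of_Icc hc).const_mul γ
      |>.congr_uIoo hleft)
    ((hE.mono (Icc_subset_Icc hc le_rfl)).intervalIntegrable_of_Icc hy.le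
      |>.congr (hright.mono uIoc_subset_uIcc)),
    ← intervalIntegral.integral_congr_uIoo hleft, ← intervalIntegral.integral_congr hright]
  simp only [intervalIntegral.integral_const_mul]
  ring

end Kernel

theorem forall_eq_add_integral_iff_of_eqOn {c m d b : ℝ} {f g₁ g₂ k : ℝ → ℝ} (hcm : c ≤ m)
    (hmd : m ≤ d) (h₁ : EqOn f g₁ (Icc c m)) (h₂ : EqOn f g₂ (Ioc m d))
    (hg₁ : ContinuousOn g₁ (Icc c m)) (hg₂ : ContinuousOn g₂ (Icc m d)) :
    (∀ x ∈ Icc c d, k x = b + ∫ y in c..x, f y) ↔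
      k c = b ∧ (∀ x ∈ Icc c m, k x = k c + ∫ y in c..x, g₁ y) ∧
        ∀ x ∈ Icc m d, k x = k m + ∫ y in m..x, g₂ y := by
  have hI₁ : ∀ x ∈ Icc c m, ∫ y in c..x, f y = ∫ y in c..x, g₁ y := fun x hx =>
    intervalIntegral.integral_congr (h₁.mono (uIcc_subset_Icc (left_mem_Icc.2 hcm) hx))
  have hI₂ : ∀ x ∈ Icc m d, ∫ y in c..x, f y = (∫ y in c..m, g₁ y) + ∫ y in m..x, g₂ y := by
    intro x hx
    have heq₁ : EqOn g₁ f (uIoc c m) := by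
      rw [uIoc_of_le hcm]; exact h₁.symm.mono Ioc_subset_Icc_self
    have heq₂ : EqOn f g₂ (uIoc m x) := by
      rw [uIoc_of_le hx.1]; exact h₂.mono (Ioc_subset_Ioc_right hx.2)
    rw [← intervalIntegral.integral_add_adjacent_intervals (b := m)
      ((hg₁.intervalIntegrable_of_Icc hcm).congr heq₁)
      (((hg₂.mono (Icc_subset_Icc le_rfl hx.2)).intervalIntegrable_of_Icc hx.1).congr heq₂.symm),
      hI₁ m ⟨hcm, le_rfl⟩, intervalIntegral.integral_congr_ae (ae_of_all _ fun y hy => heq₂ hy)]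
  constructor
  · intro h
    have hc : k c = b := by simpa using h c ⟨le_rfl, hcm.trans hmd⟩
    refine ⟨hc, fun x hx => ?_, fun x hx => ?_⟩
    · rw [h x ⟨hx.1, hx.2.trans hmd⟩, hI₁ x hx, hc]
    · rw [h x ⟨hcm.trans hx.1, hx.2⟩, h m ⟨hcm, hmd⟩, hI₂ x hx, hI₁ m ⟨hcm, le_rfl⟩, add_assoc]
  · rintro ⟨hc, hk₁, hk₂⟩ x hx
    rcases le_total x m with hxm | hxm
    · rw [hk₁ x ⟨hx.1, hxm⟩, hI₁ x ⟨hx.1, hxm⟩, hc]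
    · rw [hk₂ x ⟨hxm, hx.2⟩, hk₁ m ⟨hcm, le_rfl⟩, hI₂ x ⟨hxm, hx.2⟩, hc, add_assoc]

theorem stmt0_general (r lam γ : ℝ) (hr : 0 < r)
    (a : ℝ → ℝ) (ha : Continuous a)
    (k : ℝ → ℝ) (hk : ContinuousOn k (Icc (-r) r)) :
    (ContDiffOn ℝ 2 k (Icc (-r) 0) ∧ ContDiffOn ℝ 2 k (Icc 0 r) ∧
      (∀ x ∈ Icc (-r) 0,
        (1/2) * derivWithin (derivWithin k (Icc (-r) 0)) (Icc (-r) 0) x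
          + a x * derivWithin k (Icc (-r) 0) x = lam * k x) ∧
      (∀ x ∈ Icc 0 r,
        (1/2) * derivWithin (derivWithin k (Icc 0 r)) (Icc 0 r) x
          + a x * derivWithin k (Icc 0 r) x = lam * k x) ∧
      k (-r) = 1 ∧ derivWithin k (Icc (-r) 0) (-r) = 0 ∧
      derivWithin k (Icc 0 r) 0 = γ * derivWithin k (Icc (-r) 0) 0)
    ↔ (∀ x ∈ Icc (-r) r,
        k x = 1 + 2 * lam * ∫ y in (-r)..x, ∫ z in (-r)..y, Vker γ a y z * k z) := by
  have hr0 : -r < 0 := by linarith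
  set A : ℝ → ℝ := fun y => ∫ u in (0 : ℝ)..y, a u
  have hA : ∀ y, HasDerivAt A (a y) y := fun y => (ha.integral_hasStrictDerivAt 0 y).hasDerivAt
  have hk₁ : ContinuousOn k (Icc (-r) 0) := hk.mono (Icc_subset_Icc le_rfl hr.le)
  have hk₂ : ContinuousOn k (Icc 0 r) := hk.mono (Icc_subset_Icc hr0.le le_rfl)
  -- the flux `e^{2A(0)} k'(0+)` demanded by the transmission condition
  set C := 2 * lam * γ * ∫ z in (-r)..0, exp (2 * A z) * k z
  have hsplit := forall_eq_add_integral_iff_of_eqOn (b := 1) (k := k)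
    (f := fun y => 2 * lam * ∫ z in (-r)..y, Vker γ a y z * k z) hr0.le hr.le
    (fun y hy => by
      simp only [slDeriv, integral_Vker_mul_of_nonpos ha hA hr0.le hy.2]; ring)
    (fun y hy => by
      simp only [slDeriv, integral_Vker_mul_of_pos ha hA hr0.le hy.1
        (hk.mono (Icc_subset_Icc le_rfl hy.2)), C]; ring)
    (continuousOn_slDeriv (lam := lam) (C := 0) hA hk₁) (continuousOn_slDeriv (C := C) hA hk₂)
  have hseg₁ := sturmLiouville_Icc_iff (lam := lam) (C := 0) hr0 ha hA hk₁
  have htrans : (∀ x ∈ Icc (-r) 0, k x = k (-r) + ∫ y in (-r)..x, slDeriv A k lam (-r) 0 y) →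
      γ * derivWithin k (Icc (-r) 0) 0 = exp (-2 * A 0) * C := fun hint => by
    rw [derivWithin_eq_slDeriv hr0 hA hk₁ hint ⟨hr0.le, le_rfl⟩, slDeriv]; ring
  simp only [intervalIntegral.integral_const_mul] at hsplit
  rw [hsplit, ← sturmLiouville_Icc_iff hr ha hA hk₂]
  simp only [mul_zero] at hseg₁
  constructor
  · rintro ⟨h2₁, h2₂, hode₁, hode₂, hk0, hk'0, htr⟩
    have hint₁ := hseg₁.1 ⟨h2₁, hode₁, hk'0⟩
    exact ⟨hk0, hint₁, h2₂, hode₂, htr.trans (htrans hint₁)⟩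
  · rintro ⟨hk0, hint₁, h2₂, hode₂, htr⟩
    obtain ⟨h2₁, hode₁, hk'0⟩ := hseg₁.2 hint₁
    exact ⟨h2₁, h2₂, hode₁, hode₂, hk0, hk'0, htr.trans (htrans hint₁).symm⟩

/-- a continuous `k` on `[−r,r]` solves the Sturm–Liouville problem
`(1/2)k'' + a k' = λk` on `[−r,0]` and `[0,r]` with `k(−r)=1`, `k'(−r)=0` and the
transmission condition `k'(0+) = γ k'(0−)` iff it solves the integral equation
`k(x) = 1 + 2λ∫_{−r}^x∫_{−r}^y V(y,z)k(z) dz dy`. -/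
theorem stmt0 (r lam γ ε : ℝ) (hr : 0 < r) (hlam : 0 < lam) (hγ : 0 < γ) (hε : 0 < ε)
    (a : ℝ → ℝ) (ha : Continuous a) (hai : Integrable a)
    (k : ℝ → ℝ) (hk : ContinuousOn k (Icc (-r) r)) :
    (ContDiffOn ℝ 2 k (Icc (-r) 0) ∧ ContDiffOn ℝ 2 k (Icc 0 r) ∧
      (∀ x ∈ Icc (-r) 0,
        (1/2) * derivWithin (derivWithin k (Icc (-r) 0)) (Icc (-r) 0) x
          + a x * derivWithin k (Icc (-r) 0) x = lam * k x) ∧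
      (∀ x ∈ Icc 0 r,
        (1/2) * derivWithin (derivWithin k (Icc 0 r)) (Icc 0 r) x
          + a x * derivWithin k (Icc 0 r) x = lam * k x) ∧
      k (-r) = 1 ∧ derivWithin k (Icc (-r) 0) (-r) = 0 ∧
      derivWithin k (Icc 0 r) 0 = γ * derivWithin k (Icc (-r) 0) 0)
    ↔ (∀ x ∈ Icc (-r) r,
        k x = 1 + 2 * lam * ∫ y in (-r)..x, ∫ z in (-r)..y, Vker γ a y z * k z) :=
  stmt0_general r lam γ hr a ha k hk
end

section
/- Let r > 0, λ > 0, γ > 0, M ≥ 0, and let a_ε : ℝ → ℝ be continuous with ∫_ℝ |a_ε(x)| dx ≤ M. Define V_ε(y,z) := exp(−2∫_z^y a_ε(u) du)·(γ·[yz < 0] + [yz ≥ 0]) and the map T_ε on C[−r,r] by (T_ε f)(x) = 1 + 2λ ∫_{−r}^x ∫_{−r}^y V_ε(y,z) f(z) dz dy. Then for every ω > 0 and all continuous f, g : [−r,r] → ℝ, ‖T_ε f − T_ε g‖_ω ≤ (2λ e^{2M} max(1,γ) / ω²) · ‖f − g‖_ω, where ‖h‖_ω := max_{x ∈ [−r,r]}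 e^{−ω(x+r)} |h(x)| is the Bielecki-type norm on C[−r,r]. -/
/-!
Since `|∫_z^y a| ≤ ∫ |a| ≤ M`, the kernel satisfies `|V(y,z)| ≤ C := e^{2M} max(1, γ)`.
With `B = ‖f - g‖_ω` we have `|f - g|(z) ≤ B e^{ω(z+r)}` on `[-r, r]`, and each of the two
integrations from `-r` of the exponential weight gains a factor `1/ω`, as
`∫_{-r}^x e^{ω(y+r)} dy ≤ e^{ω(x+r)}/ω`. Hence `|T f - T g|(x) ≤ 2λ C B ω⁻² e^{ω(x+r)}`.
-/

open MeasureTheory Set Filter Topology Real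

/-- The map `(T f)(x) = 1 + 2λ ∫_{−r}^x ∫_{−r}^y V(y,z) f(z) dz dy`. -/
noncomputable def Tmap (r lam γ : ℝ) (a : ℝ → ℝ) (f : ℝ → ℝ) (x : ℝ) : ℝ :=
  1 + 2 * lam * ∫ y in (-r)..x, ∫ z in (-r)..y, Vker γ a y z * f z

/-- The Bielecki-type norm `‖h‖_ω = max_{x∈[−r,r]} e^{−ω(x+r)}|h(x)|` on `C[−r,r]`. -/
noncomputable def BNorm (r ω : ℝ) (h : ℝ → ℝ) : ℝ :=
  ⨆ x : Icc (-r) r, Real.exp (-ω * ((x : ℝ) + r)) * |h (x : ℝ)|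

open scoped Interval

section Volterra

variable {c x ω D : ℝ}

theorem integral_exp_mul_sub (hω : ω ≠ 0) :
    ∫ y in c..x, exp (ω * (y - c)) = (exp (ω * (x - c)) - 1) / ω := by
  simp_rw [mul_sub]
  rw [intervalIntegral.integral_comp_mul_sub (f := exp) hω, integral_exp, sub_self, exp_zero,
    smul_eq_mul, inv_mul_eq_div]

theorem abs_intervalIntegral_le_of_abs_le_exp {F : ℝ → ℝ} (hω : 0 < ω) (hcx : c ≤ x) (hD : 0 ≤ D)
    (hF : ∀ y ∈ Ioc c x, |F y| ≤ D * exp (ω * (y - c))) :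
    |∫ y in c..x, F y| ≤ D / ω * exp (ω * (x - c)) := by
  have hexp : 1 ≤ exp (ω * (x - c)) := one_le_exp (by nlinarith)
  have hbound : ∀ᵐ y ∂volume.restrict (Ι c x), ‖F y‖ ≤ D * exp (ω * (y - c)) := by
    rw [uIoc_of_le hcx]
    exact ae_restrict_of_forall_mem measurableSet_Ioc hF
  calc |∫ y in c..x, F y| ≤ |∫ y in c..x, D * exp (ω * (y - c))| :=
        intervalIntegral.norm_integral_le_abs_of_norm_le hbound
          ((by fun_prop : Continuous fun y => D * exp (ω * (y - c))).intervalIntegrable _ _)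
    _ = D / ω * (exp (ω * (x - c)) - 1) := by
        rw [intervalIntegral.integral_const_mul, integral_exp_mul_sub hω.ne', abs_of_nonneg]
        · ring
        · have : 0 ≤ exp (ω * (x - c)) - 1 := by linarith
          positivity
    _ ≤ D / ω * exp (ω * (x - c)) := by gcongr; linarith

theorem abs_iterated_intervalIntegral_le {K : ℝ → ℝ → ℝ} {d : ℝ → ℝ} {C B : ℝ}
    (hω : 0 < ω) (hcx : c ≤ x) (hC : 0 ≤ C) (hB : 0 ≤ B)
    (hK : ∀ y ∈ Ioc c x, ∀ z ∈ Ioc c y, |K y z| ≤ C)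
    (hd : ∀ z ∈ Ioc c x, |d z| ≤ B * exp (ω * (z - c))) :
    |∫ y in c..x, ∫ z in c..y, K y z * d z| ≤ C * B / ω ^ 2 * exp (ω * (x - c)) := by
  have hinner : ∀ y ∈ Ioc c x, |∫ z in c..y, K y z * d z| ≤ C * B / ω * exp (ω * (y - c)) := by
    intro y hy
    refine abs_intervalIntegral_le_of_abs_le_exp hω hy.1.le (by positivity) fun z hz => ?_
    rw [abs_mul, mul_assoc]
    exact mul_le_mul (hK y hy z hz) (hd z ⟨hz.1, hz.2.trans hy.2⟩) (abs_nonneg _) hC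
  calc _ ≤ C * B / ω / ω * exp (ω * (x - c)) :=
        abs_intervalIntegral_le_of_abs_le_exp hω hcx (by positivity) hinner
    _ = C * B / ω ^ 2 * exp (ω * (x - c)) := by rw [div_div, sq]

theorem measurable_setIntegral_of_measurable_uncurry {F : ℝ → ℝ → ℝ} {S : ℝ → Set ℝ}
    (hF : Measurable (Function.uncurry F)) (hS : MeasurableSet {p : ℝ × ℝ | p.2 ∈ S p.1}) :
    Measurable fun y => ∫ z in S y, F y z := by
  have hG := (hF.indicator hS).stronglyMeasurable.integral_prod_right' (ν := volume)
  convert hG.measurable using 2 with y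
  have hSy : MeasurableSet (S y) := measurable_prodMk_left hS
  rw [← integral_indicator hSy]
  rfl

theorem measurable_intervalIntegral_of_measurable_uncurry {F : ℝ → ℝ → ℝ}
    (hF : Measurable (Function.uncurry F)) : Measurable fun y => ∫ z in c..y, F y z :=
  (measurable_setIntegral_of_measurable_uncurry (S := fun y => Ioc c y) hF
      ((measurableSet_lt measurable_const measurable_snd).inter
        (measurableSet_le measurable_snd measurable_fst))).sub
    (measurable_setIntegral_of_measurable_uncurry (S := fun y => Ioc y c) hF
      ((measurableSet_lt measurable_fst measurable_snd).inter
        (measurableSet_le measurable_snd measurable_const)))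

theorem intervalIntegrable_intervalIntegral_of_abs_le {F : ℝ → ℝ → ℝ}
    (hF : Measurable (Function.uncurry F)) (hD : ∀ y ∈ [[c, x]], ∀ z ∈ [[c, x]], |F y z| ≤ D) :
    IntervalIntegrable (fun y => ∫ z in c..y, F y z) volume c x := by
  refine (intervalIntegrable_const (c := D * |x - c|)).mono_fun'
    (measurable_intervalIntegral_of_measurable_uncurry hF).aestronglyMeasurable.restrict ?_
  refine ae_restrict_of_forall_mem measurableSet_uIoc fun y hy => ?_
  have hy' : y ∈ [[c, x]] := uIoc_subset_uIcc hy
  calc ‖∫ z in c..y, F y z‖ ≤ D * |y - c| :=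
        intervalIntegral.norm_integral_le_of_norm_le_const fun z hz =>
          hD y hy' z (uIcc_subset_uIcc_left hy' (uIoc_subset_uIcc hz))
    _ ≤ D * |x - c| :=
        mul_le_mul_of_nonneg_left (abs_sub_left_of_mem_uIcc hy')
          ((abs_nonneg _).trans (hD c left_mem_uIcc c left_mem_uIcc))

end Volterra

section Kernel

variable {γ M : ℝ} {a : ℝ → ℝ}

theorem abs_intervalIntegral_le_integral_abs (ha : Integrable a) (z y : ℝ) :
    |∫ u in z..y, a u| ≤ ∫ u, |a u| := by
  simpa only [Real.norm_eq_abs] using intervalIntegral.norm_integral_le_integral_norm_uIoc.trans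
    (setIntegral_le_integral ha.norm (Eventually.of_forall fun u => norm_nonneg (a u)))

theorem abs_Vker_le (hγ : 0 ≤ γ) (ha : Integrable a) (haM : ∫ x, |a x| ≤ M) (y z : ℝ) :
    |Vker γ a y z| ≤ exp (2 * M) * max 1 γ := by
  have hexp : exp (-2 * ∫ u in z..y, a u) ≤ exp (2 * M) := by
    have := abs_le.1 ((abs_intervalIntegral_le_integral_abs ha z y).trans haM)
    exact exp_le_exp.2 (by linarith)
  have hweight : |γ * (if y * z < 0 then 1 else 0) + (if 0 ≤ y * z then 1 else 0)| ≤ max 1 γ := by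
    rcases lt_or_ge (y * z) 0 with h | h
    · simp [h, not_le.2 h, abs_of_nonneg hγ]
    · simp [h, not_lt.2 h]
  rw [Vker, abs_mul, abs_of_pos (exp_pos _)]
  exact mul_le_mul hexp hweight (abs_nonneg _) (exp_pos _).le

theorem measurable_uncurry_Vker (ha : Integrable a) : Measurable (Function.uncurry (Vker γ a)) := by
  -- `∫_z^y a = A y - A z` for the primitive `A`, which makes the exponential factor continuous
  have hA : Continuous fun t => ∫ u in (0 : ℝ)..t, a u :=
    intervalIntegral.continuous_primitive (fun _ _ => ha.intervalIntegrable) 0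
  have hVker : Function.uncurry (Vker γ a) = fun p : ℝ × ℝ =>
      exp (-2 * ((∫ u in (0 : ℝ)..p.1, a u) - ∫ u in (0 : ℝ)..p.2, a u)) *
        (γ * (if p.1 * p.2 < 0 then 1 else 0) + (if 0 ≤ p.1 * p.2 then 1 else 0)) := by
    ext p
    rw [Function.uncurry_apply_pair, Vker, intervalIntegral.integral_interval_sub_left
      ha.intervalIntegrable ha.intervalIntegrable]
  have hprod : Measurable fun p : ℝ × ℝ => p.1 * p.2 := measurable_fst.mul measurable_snd
  rw [hVker]
  refine (Continuous.measurable (by fun_prop)).mul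
    ((measurable_const.mul (Measurable.ite (measurableSet_lt hprod measurable_const)
      measurable_const measurable_const)).add
    (Measurable.ite (measurableSet_le measurable_const hprod) measurable_const measurable_const))

end Kernel

section Tmap

variable {r lam γ : ℝ} {a f g : ℝ → ℝ}

theorem intervalIntegrable_Vker_mul (hγ : 0 ≤ γ) (ha : Integrable a) {c d : ℝ}
    (hf : IntervalIntegrable f volume c d) (y : ℝ) :
    IntervalIntegrable (fun z => Vker γ a y z * f z) volume c d := by
  rw [intervalIntegrable_iff] at hf ⊢
  exact hf.bdd_mul ((measurable_uncurry_Vker ha).comp measurable_prodMk_left).aestronglyMeasurable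
    (ae_of_all _ (abs_Vker_le hγ ha le_rfl y))

theorem intervalIntegrable_integral_Vker_mul (hγ : 0 ≤ γ) (ha : Integrable a) {b c x : ℝ}
    (hf : ContinuousOn f (Icc c b)) (hx : x ∈ Icc c b) :
    IntervalIntegrable (fun y => ∫ z in c..y, Vker γ a y z * f z) volume c x := by
  -- a continuous extension of `f` off `[c, b]` makes the integrand jointly measurable
  set f' := IccExtend (hx.1.trans hx.2) ((Icc c b).domRestrict f)
  have hf' : Continuous f' := continuous_IccExtend_iff.2 hf.domRestrict
  have hsub : [[c, x]] ⊆ Icc c b := by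
    rw [uIcc_of_le hx.1]
    exact Icc_subset_Icc_right hx.2
  obtain ⟨K, hK⟩ := (isCompact_uIcc (a := c) (b := x)).exists_bound_of_continuousOn hf'.continuousOn
  have hF : IntervalIntegrable (fun y => ∫ z in c..y, Vker γ a y z * f' z) volume c x := by
    refine intervalIntegrable_intervalIntegral_of_abs_le (D := exp (2 * ∫ u, |a u|) * max 1 γ * K)
      ((measurable_uncurry_Vker ha).mul (hf'.measurable.comp measurable_snd)) fun y _ z hz => ?_
    rw [abs_mul]
    exact mul_le_mul (abs_Vker_le hγ ha le_rfl y z) (hK z hz) (abs_nonneg _) (by positivity)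
  refine hF.congr_ae (ae_restrict_of_forall_mem measurableSet_uIoc fun y hy =>
    intervalIntegral.integral_congr fun z hz => ?_)
  have hz' : z ∈ Icc c b := hsub (uIcc_subset_uIcc_left (uIoc_subset_uIcc hy) hz)
  simp only [f', IccExtend_of_mem _ _ hz', domRestrict_apply]

theorem Tmap_sub_Tmap (hγ : 0 ≤ γ) (ha : Integrable a) (hf : ContinuousOn f (Icc (-r) r))
    (hg : ContinuousOn g (Icc (-r) r)) {x : ℝ} (hx : x ∈ Icc (-r) r) :
    Tmap r lam γ a f x - Tmap r lam γ a g x =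
      2 * lam * ∫ y in (-r)..x, ∫ z in (-r)..y, Vker γ a y z * (f z - g z) := by
  have hsub : [[-r, x]] ⊆ Icc (-r) r := by
    rw [uIcc_of_le hx.1]
    exact Icc_subset_Icc_right hx.2
  have hinner : EqOn (fun y => ∫ z in (-r)..y, Vker γ a y z * (f z - g z))
      (fun y => (∫ z in (-r)..y, Vker γ a y z * f z) - ∫ z in (-r)..y, Vker γ a y z * g z)
      [[-r, x]] := by
    intro y hy
    have hsub' := (uIcc_subset_uIcc_left hy).trans hsub
    simp_rw [mul_sub]
    exact intervalIntegral.integral_sub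
      (intervalIntegrable_Vker_mul hγ ha ((hf.mono hsub').intervalIntegrable) y)
      (intervalIntegrable_Vker_mul hγ ha ((hg.mono hsub').intervalIntegrable) y)
  rw [intervalIntegral.integral_congr hinner, intervalIntegral.integral_sub
    (intervalIntegrable_integral_Vker_mul hγ ha hf hx)
    (intervalIntegrable_integral_Vker_mul hγ ha hg hx)]
  simp only [Tmap]
  ring

end Tmap

section BNorm

variable {r ω : ℝ} {h : ℝ → ℝ}

theorem BNorm_nonneg : 0 ≤ BNorm r ω h :=
  Real.iSup_nonneg fun _ => by positivity

theorem abs_le_BNorm_mul_exp (hh : ContinuousOn h (Icc (-r) r)) {x : ℝ} (hx : x ∈ Icc (-r) r) :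
    |h x| ≤ BNorm r ω h * exp (ω * (x + r)) := by
  have hbdd : BddAbove (range fun x : Icc (-r) r => exp (-ω * (x + r)) * |h x|) :=
    (isCompact_range ((by fun_prop : Continuous fun x : Icc (-r) r => exp (-ω * (x + r))).mul
      (continuous_abs.comp hh.domRestrict))).bddAbove
  calc |h x| = exp (ω * (x + r)) * (exp (-ω * (x + r)) * |h x|) := by
        rw [← mul_assoc, ← exp_add, neg_mul, add_neg_cancel, exp_zero, one_mul]
    _ ≤ exp (ω * (x + r)) * BNorm r ω h := by
        gcongr
        exact le_ciSup hbdd ⟨x, hx⟩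
    _ = BNorm r ω h * exp (ω * (x + r)) := mul_comm _ _

theorem BNorm_le {K : ℝ} (hK : 0 ≤ K)
    (hh : ∀ x ∈ Icc (-r) r, |h x| ≤ K * exp (ω * (x + r))) : BNorm r ω h ≤ K := by
  refine Real.iSup_le (fun x => ?_) hK
  calc exp (-ω * (x + r)) * |h x| ≤ exp (-ω * (x + r)) * (K * exp (ω * (x + r))) := by
        gcongr
        exact hh x x.2
    _ = K := by rw [mul_left_comm, ← exp_add, neg_mul, neg_add_cancel, exp_zero, mul_one]

end BNorm

theorem stmt1_general (r lam γ M ω : ℝ) (hlam : 0 < lam) (hγ : 0 < γ)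
    (hω : 0 < ω)
    (a : ℝ → ℝ) (hai : Integrable a)
    (haM : ∫ x, |a x| ≤ M)
    (f g : ℝ → ℝ) (hf : ContinuousOn f (Icc (-r) r)) (hg : ContinuousOn g (Icc (-r) r)) :
    BNorm r ω (fun x => Tmap r lam γ a f x - Tmap r lam γ a g x)
      ≤ (2 * lam * Real.exp (2 * M) * max 1 γ / ω ^ 2) * BNorm r ω (fun x => f x - g x) := by
  set C := exp (2 * M) * max 1 γ
  set B := BNorm r ω (fun x => f x - g x)
  have hC : 0 ≤ C := by positivity
  have hB : 0 ≤ B := BNorm_nonneg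
  refine BNorm_le (by positivity) fun x hx => ?_
  have hV : ∀ y ∈ Ioc (-r) x, ∀ z ∈ Ioc (-r) y, |Vker γ a y z| ≤ C :=
    fun y _ z _ => abs_Vker_le hγ.le hai haM y z
  have hfg : ∀ z ∈ Ioc (-r) x, |f z - g z| ≤ B * exp (ω * (z - -r)) := fun z hz => by
    rw [sub_neg_eq_add]
    exact abs_le_BNorm_mul_exp (hf.sub hg) ⟨hz.1.le, hz.2.trans hx.2⟩
  have hVolterra := abs_iterated_intervalIntegral_le hω hx.1 hC hB hV hfg
  rw [sub_neg_eq_add] at hVolterra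
  rw [Tmap_sub_Tmap hγ.le hai hf hg hx, abs_mul, abs_of_pos (by positivity)]
  calc 2 * lam * |∫ y in (-r)..x, ∫ z in (-r)..y, Vker γ a y z * (f z - g z)|
      ≤ 2 * lam * (C * B / ω ^ 2 * exp (ω * (x + r))) := by gcongr
    _ = 2 * lam * exp (2 * M) * max 1 γ / ω ^ 2 * B * exp (ω * (x + r)) := by ring

/-- the Bielecki-norm contraction estimate
`‖T_ε f − T_ε g‖_ω ≤ (2λ e^{2M} max(1,γ)/ω²)·‖f − g‖_ω`. -/
theorem stmt1 (r lam γ M ω ε : ℝ) (hr : 0 < r) (hlam : 0 < lam) (hγ : 0 < γ)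
    (hM : 0 ≤ M) (hω : 0 < ω) (hε : 0 < ε)
    (a : ℝ → ℝ) (ha : Continuous a) (hai : Integrable a)
    (haM : ∫ x, |a x| ≤ M)
    (f g : ℝ → ℝ) (hf : ContinuousOn f (Icc (-r) r)) (hg : ContinuousOn g (Icc (-r) r)) :
    BNorm r ω (fun x => Tmap r lam γ a f x - Tmap r lam γ a g x)
      ≤ (2 * lam * Real.exp (2 * M) * max 1 γ / ω ^ 2) * BNorm r ω (fun x => f x - g x) :=
  stmt1_general r lam γ M ω hlam hγ hω a hai haM f g hf hg
end

section
/- Let E be a complete separable metric space, r₀ ≥ 0, and let μ_{ε,r} be Borel probability measures on E indexed by ε ≥ 0 and r ∈ (r₀,∞]. Assume: (i) for every finite r ∈ (r₀,∞), μ_{ε,r} converges weakly to μ_{0,r} as ε → 0+; (ii) for each finite r ∈ (r₀,∞) there is an open set U_r ⊆ E such that (a) μ_{ε,r}(A) = μ_{ε,∞}(A) for every Borel set A ⊆ U_r and every ε ≥ 0, and (b) lim_{r→∞} sup_{ε≥0} μ_{ε,∞}(E ∖ U_r) = 0. Then μ_{ε,∞} converges weakly to μ_{0,∞} as ε → 0+.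 -/
/-!
Fix a bounded continuous `f`. Since `μ_{ε,r}` and `μ_{ε,∞}` agree on `U_r`, the integrals of `f`
against them differ by at most `2‖f‖ μ_{ε,∞}(E ∖ U_r)`, so `ε ↦ ∫ f dμ_{ε,r}` converges to
`ε ↦ ∫ f dμ_{ε,∞}` uniformly on `ε ≥ 0` as `r → ∞`. Each approximant is right-continuous at
`0` by (i), hence so is the uniform limit.
-/

open MeasureTheory Set Filter Topology
open scoped ENNReal BoundedContinuousFunction

theorem TendstoUniformlyOn.continuousWithinAt_of_eventually {α β ι : Type*} [TopologicalSpace α]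
    [UniformSpace β] {F : ι → α → β} {f : α → β} {p : Filter ι} [p.NeBot] {s : Set α} {x : α}
    (h : TendstoUniformlyOn F f p s) (hx : x ∈ s)
    (hc : ∀ᶠ n in p, ContinuousWithinAt (F n) s x) : ContinuousWithinAt f s x :=
  continuousWithinAt_of_locally_uniform_approx_of_continuousWithinAt hx fun u hu =>
    let ⟨n, hFn, hcn⟩ := ((h u hu).and hc).exists
    ⟨s, self_mem_nhdsWithin, F n, hcn, hFn⟩

section

variable {E : Type*} [TopologicalSpace E] [MeasurableSpace E] [OpensMeasurableSpace E]

theorem abs_integral_sub_integral_le_of_restrict_eq {ν κ : Measure E} [IsProbabilityMeasure ν]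
    [IsProbabilityMeasure κ] {U : Set E} (hU : MeasurableSet U)
    (h : ν.restrict U = κ.restrict U) (f : E →ᵇ ℝ) :
    |∫ x, f x ∂ν - ∫ x, f x ∂κ| ≤ 2 * ‖f‖ * κ.real Uᶜ := by
  have hcompl : ν.real Uᶜ = κ.real Uᶜ := by
    have hUreal : ν.real U = κ.real U := by
      rw [← measureReal_restrict_apply_univ, h, measureReal_restrict_apply_univ]
    rw [measureReal_compl hU, measureReal_compl hU, hUreal, probReal_univ, probReal_univ]
  have hbound : ∀ m : Measure E, [IsFiniteMeasure m] → ‖∫ x in Uᶜ, f x ∂m‖ ≤ ‖f‖ * m.real Uᶜ :=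
    fun m _ => norm_setIntegral_le_of_norm_le_const (measure_lt_top m Uᶜ)
      fun x _ => f.norm_coe_le_norm x
  calc |∫ x, f x ∂ν - ∫ x, f x ∂κ|
      = |∫ x in Uᶜ, f x ∂ν - ∫ x in Uᶜ, f x ∂κ| := by
        rw [← integral_add_compl hU (f.integrable ν), ← integral_add_compl hU (f.integrable κ), h]
        ring_nf
    _ ≤ ‖∫ x in Uᶜ, f x ∂ν‖ + ‖∫ x in Uᶜ, f x ∂κ‖ := abs_sub _ _
    _ ≤ ‖f‖ * ν.real Uᶜ + ‖f‖ * κ.real Uᶜ := add_le_add (hbound ν) (hbound κ)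
    _ = 2 * ‖f‖ * κ.real Uᶜ := by rw [hcompl]; ring

theorem tendstoUniformlyOn_integral_of_restrict_eq {ι α : Type*} {p : Filter ι} {s : Set α}
    (ν : ι → α → ProbabilityMeasure E) (κ : α → ProbabilityMeasure E) (U : ι → Set E)
    (hU : ∀ᶠ i in p, MeasurableSet (U i) ∧
      ∀ a ∈ s, (ν i a : Measure E).restrict (U i) = (κ a : Measure E).restrict (U i))
    (hsmall : Tendsto (fun i => ⨆ a : s, (κ a : Measure E) (U i)ᶜ) p (𝓝 0)) (f : E →ᵇ ℝ) :
    TendstoUniformlyOn (fun i a => ∫ x, f x ∂(ν i a : Measure E))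
      (fun a => ∫ x, f x ∂(κ a : Measure E)) p s := by
  set b : ι → ℝ := fun i => 2 * ‖f‖ * (⨆ a : s, (κ a : Measure E) (U i)ᶜ).toReal
  have hb : Tendsto b p (𝓝 0) := by
    simpa [b] using ((ENNReal.tendsto_toReal ENNReal.zero_ne_top).comp hsmall).const_mul (2 * ‖f‖)
  rw [Metric.tendstoUniformlyOn_iff]
  intro δ hδ
  filter_upwards [hU, hb.eventually_lt_const hδ] with i ⟨hUi, hagree⟩ hbi a ha
  have hsup_ne_top : (⨆ a : s, (κ a : Measure E) (U i)ᶜ) ≠ ∞ :=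
    ne_top_of_le_ne_top ENNReal.one_ne_top (iSup_le fun _ => prob_le_one)
  have hκ_le : (κ a : Measure E).real (U i)ᶜ ≤ (⨆ a : s, (κ a : Measure E) (U i)ᶜ).toReal :=
    ENNReal.toReal_mono hsup_ne_top (le_iSup (fun a : s => (κ a : Measure E) (U i)ᶜ) ⟨a, ha⟩)
  calc dist (∫ x, f x ∂(κ a : Measure E)) (∫ x, f x ∂(ν i a : Measure E))
      = |∫ x, f x ∂(ν i a : Measure E) - ∫ x, f x ∂(κ a : Measure E)| := by
        rw [Real.dist_eq, abs_sub_comm]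
    _ ≤ 2 * ‖f‖ * (κ a : Measure E).real (U i)ᶜ :=
        abs_integral_sub_integral_le_of_restrict_eq hUi (hagree a ha) f
    _ ≤ b i := mul_le_mul_of_nonneg_left hκ_le (by positivity)
    _ < δ := hbi

end

theorem stmt12_general {E : Type*} [MetricSpace E] [MeasurableSpace E] [BorelSpace E]
    (r₀ : ℝ)
    (μ : ℝ → ℝ → ProbabilityMeasure E) (μinf : ℝ → ProbabilityMeasure E)
    (hconv : ∀ r > r₀, Tendsto (fun ε => μ ε r) (𝓝[>] (0:ℝ)) (𝓝 (μ 0 r)))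
    (hU : ∃ U : ℝ → Set E,
      (∀ r > r₀, IsOpen (U r)) ∧
      (∀ r > r₀, ∀ ε ≥ (0:ℝ), ∀ A : Set E, MeasurableSet A → A ⊆ U r →
        (μ ε r : Measure E) A = (μinf ε : Measure E) A) ∧
      Tendsto (fun r => ⨆ ε : {ε : ℝ // 0 ≤ ε}, (μinf ε : Measure E) (U r)ᶜ)
        atTop (𝓝 (0 : ℝ≥0∞))) :
    Tendsto μinf (𝓝[>] (0:ℝ)) (𝓝 (μinf 0)) := by
  obtain ⟨U, hUopen, hUagree, hUsmall⟩ := hU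
  rw [ProbabilityMeasure.tendsto_iff_forall_integral_tendsto]
  intro f
  have hunif : TendstoUniformlyOn (fun r ε => ∫ x, f x ∂(μ ε r : Measure E))
      (fun ε => ∫ x, f x ∂(μinf ε : Measure E)) atTop (Ici 0) :=
    tendstoUniformlyOn_integral_of_restrict_eq (fun r ε => μ ε r) μinf U
      ((eventually_gt_atTop r₀).mono fun r hr => ⟨(hUopen r hr).measurableSet, fun ε hε =>
        (Measure.restrict_congr_meas (hUopen r hr).measurableSet).2 fun A hAU hA =>
          hUagree r hr ε hε A hA hAU⟩)
      hUsmall f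
  have hcont : ∀ᶠ r in atTop,
      ContinuousWithinAt (fun ε => ∫ x, f x ∂(μ ε r : Measure E)) (Ici 0) 0 :=
    (eventually_gt_atTop r₀).mono fun r hr => continuousWithinAt_Ioi_iff_Ici.1 <|
      ProbabilityMeasure.tendsto_iff_forall_integral_tendsto.1 (hconv r hr) f
  exact continuousWithinAt_Ioi_iff_Ici.2 <|
    hunif.continuousWithinAt_of_eventually self_mem_Ici hcont

/-- a two-parameter weak-convergence lemma. If for every finite `r > r₀`
the measures `μ_{ε,r}` converge weakly to `μ_{0,r}` as `ε → 0+`, and for each finite `r`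
there is an open set `U_r` on whose Borel subsets `μ_{ε,r}` and `μ_{ε,∞}` agree for all
`ε ≥ 0`, with `sup_{ε≥0} μ_{ε,∞}(E∖U_r) → 0` as `r → ∞`, then `μ_{ε,∞}` converges weakly
to `μ_{0,∞}` as `ε → 0+`. -/
theorem stmt12 {E : Type*} [MetricSpace E] [CompleteSpace E]
    [TopologicalSpace.SeparableSpace E] [MeasurableSpace E] [BorelSpace E]
    (r₀ : ℝ) (hr₀ : 0 ≤ r₀)
    (μ : ℝ → ℝ → ProbabilityMeasure E) (μinf : ℝ → ProbabilityMeasure E)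
    (hconv : ∀ r > r₀, Tendsto (fun ε => μ ε r) (𝓝[>] (0:ℝ)) (𝓝 (μ 0 r)))
    (hU : ∃ U : ℝ → Set E,
      (∀ r > r₀, IsOpen (U r)) ∧
      (∀ r > r₀, ∀ ε ≥ (0:ℝ), ∀ A : Set E, MeasurableSet A → A ⊆ U r →
        (μ ε r : Measure E) A = (μinf ε : Measure E) A) ∧
      Tendsto (fun r => ⨆ ε : {ε : ℝ // 0 ≤ ε}, (μinf ε : Measure E) (U r)ᶜ)
        atTop (𝓝 (0 : ℝ≥0∞))) :
    Tendsto μinf (𝓝[>] (0:ℝ)) (𝓝 (μinf 0)) :=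
  stmt12_general r₀ μ μinf hconv hU
end

section
/- Let λ > 0, α ∈ ℝ, and let (a_ε)_{ε>0} be continuous functions on [0,∞) with M := sup_{ε>0} ∫_0^∞ |a_ε(u)| du < ∞ and lim_{ε→0} ∫_y^z a_ε(u) du = α·[y = 0] for all 0 ≤ y < z. Set 𝔞_ε(x) := 2∫_0^x a_ε(y) dy. For each ε > 0 let j_ε : [0,∞) → ℝ be a continuous function satisfying j_ε(x) = 1 + 2λ ∫_0^x e^{−𝔞_ε(y)} ∫_0^y e^{𝔞_ε(z)} j_ε(z) dz dy for all x ≥ 0. Then, as ε → 0+, j_ε converges to the function x ↦ cosh(√(2λ)·x) uniformly on every compact subset of [0,∞). -/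
open MeasureTheory Set Filter Topology Real

/-!
Write `𝔞 = 2 ∫₀ˣ a_ε` and `c(x) = cosh (√(2λ) x)`. Both `j_ε` and `c` solve Volterra equations
`f = 1 + 2λ ∫₀ˣ ∫₀ʸ w(y, z) f(z) dz dy`, with weight `w = e^{𝔞(z) - 𝔞(y)} ≤ e^{2M}` for `j_ε` and
`w = 1` for `c`. Grönwall's inequality bounds `|j_ε - c|` on `[0, L]` by a constant times
`∫₀ᴸ ∫₀ʸ |e^{𝔞(z) - 𝔞(y)} - 1| c(z) dz dy`. For `0 < z < y` the exponent is `-2 ∫_z^y a_ε → 0`: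
the drift mass `α` concentrating at the origin cancels in the difference, so by dominated
convergence this error term tends to `0`.
-/

theorem cosh_mul_eq_one_add_sq_mul_integral_integral (k x : ℝ) :
    cosh (k * x) = 1 + k ^ 2 * ∫ y in (0:ℝ)..x, ∫ z in (0:ℝ)..y, cosh (k * z) := by
  have hlin : ∀ z : ℝ, HasDerivAt (fun z => k * z) k z := fun z => by
    simpa using (hasDerivAt_id z).const_mul k
  have hsinh : ∀ y, k * ∫ z in (0:ℝ)..y, cosh (k * z) = sinh (k * y) := by
    intro y
    rw [← intervalIntegral.integral_const_mul, intervalIntegral.integral_eq_sub_of_hasDerivAt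
      (f := fun z => sinh (k * z)) (fun z _ => by simpa [mul_comm] using (hlin z).sinh)
      (by apply Continuous.intervalIntegrable; fun_prop)]
    simp
  have hcosh : k * ∫ y in (0:ℝ)..x, sinh (k * y) = cosh (k * x) - 1 := by
    rw [← intervalIntegral.integral_const_mul, intervalIntegral.integral_eq_sub_of_hasDerivAt
      (f := fun z => cosh (k * z)) (fun z _ => by simpa [mul_comm] using (hlin z).cosh)
      (by apply Continuous.intervalIntegrable; fun_prop)]
    simp
  rw [sq, mul_assoc, ← intervalIntegral.integral_const_mul]
  simp_rw [hsinh, hcosh]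
  ring

theorem add_mul_gronwallBound_zero (K E t : ℝ) :
    E + K * gronwallBound 0 K E t = E * exp (K * t) := by
  rcases eq_or_ne K 0 with rfl | hK
  · simp
  · rw [gronwallBound_of_K_ne_0 hK]
    field_simp
    ring

theorem le_mul_exp_of_le_add_mul_integral {g : ℝ → ℝ} {K E a b : ℝ} (hK : 0 ≤ K)
    (hg : ContinuousOn g (Icc a b)) (h : ∀ x ∈ Icc a b, g x ≤ E + K * ∫ t in a..x, g t) :
    ∀ x ∈ Icc a b, g x ≤ E * exp (K * (x - a)) := by
  intro x hx
  have hab : a ≤ b := hx.1.trans hx.2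
  -- extended continuously to `ℝ`, `g` has a primitive that is differentiable everywhere
  set g' : ℝ → ℝ := fun t => g (projIcc a b hab t)
  have hg' : Continuous g' :=
    hg.comp_continuous (continuous_subtype_val.comp continuous_projIcc) fun t =>
      (projIcc a b hab t).2
  have hg'_eq : ∀ t ∈ Icc a b, g' t = g t := fun t ht => by simp [g', projIcc_of_mem hab ht]
  have hprim : ∀ t ∈ Icc a b, ∫ s in a..t, g' s = ∫ s in a..t, g s := fun t ht =>
    intervalIntegral.integral_congr fun s hs =>
      hg'_eq s (Icc_subset_Icc_right ht.2 (by rwa [uIcc_of_le ht.1] at hs))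
  have hderiv : ∀ t, HasDerivAt (fun u => ∫ s in a..u, g' s) (g' t) t := fun t =>
    intervalIntegral.integral_hasDerivAt_right (hg'.intervalIntegrable _ _)
      hg'.aestronglyMeasurable.stronglyMeasurableAtFilter hg'.continuousAt
  have hgron := le_gronwallBound_of_liminf_deriv_right_le (δ := 0) (K := K) (ε := E)
    (intervalIntegral.continuous_primitive (fun _ _ => hg'.intervalIntegrable _ _) a).continuousOn
    (fun t _ r hr => (hderiv t).hasDerivWithinAt.liminf_right_slope_le hr) (by simp)
    (fun t ht => by
      have ht' : t ∈ Icc a b := Ico_subset_Icc_self ht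
      rw [hg'_eq t ht', hprim t ht', add_comm]
      exact h t ht') x hx
  calc g x ≤ E + K * ∫ t in a..x, g t := h x hx
    _ ≤ E + K * gronwallBound 0 K E (x - a) := by
        rw [← hprim x hx]; gcongr
    _ = E * exp (K * (x - a)) := add_mul_gronwallBound_zero K E _

theorem ContinuousOn.intervalIntegrable_of_mem_Icc {L : ℝ} {φ : ℝ → ℝ}
    (hφ : ContinuousOn φ (Icc 0 L)) {y : ℝ} (hy : y ∈ Icc 0 L) : IntervalIntegrable φ volume 0 y :=
  (hφ.mono (by rw [uIcc_of_le hy.1]; exact Icc_subset_Icc_right hy.2)).intervalIntegrable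

noncomputable def kernelDefect (B c : ℝ → ℝ) (y : ℝ) : ℝ :=
  ∫ z in (0:ℝ)..y, |exp (B z - B y) - 1| * |c z|

noncomputable def kernelError (B c : ℝ → ℝ) (L : ℝ) : ℝ :=
  ∫ y in (0:ℝ)..L, kernelDefect B c y

section Volterra

variable {B c f r : ℝ → ℝ} {μ D L : ℝ}

theorem continuous_kernelDefect (hB : Continuous B) (hc : Continuous c) :
    Continuous (kernelDefect B c) := by
  unfold kernelDefect; fun_prop

theorem kernelDefect_nonneg {y : ℝ} (hy : 0 ≤ y) : 0 ≤ kernelDefect B c y :=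
  intervalIntegral.integral_nonneg hy fun _ _ => by positivity

theorem kernelDefect_le_kernelError (hB : Continuous B) (hc : Continuous c) {y : ℝ}
    (hy : y ∈ Icc 0 L) : ∫ t in (0:ℝ)..y, kernelDefect B c t ≤ kernelError B c L :=
  intervalIntegral.integral_mono_interval le_rfl hy.1 hy.2
    ((ae_restrict_iff' measurableSet_Ioc).mpr
      (ae_of_all _ fun _ ht => kernelDefect_nonneg ht.1.le))
    ((continuous_kernelDefect hB hc).intervalIntegrable _ _)

theorem abs_exp_neg_mul_integral_sub_integral_le (hB : Continuous B)
    (hBD : ∀ y ∈ Icc 0 L, ∀ z ∈ Icc 0 L, B z - B y ≤ D) (hf : ContinuousOn f (Icc 0 L))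
    (hc : Continuous c) {y : ℝ} (hy : y ∈ Icc 0 L) :
    |exp (-B y) * (∫ z in (0:ℝ)..y, exp (B z) * f z) - ∫ z in (0:ℝ)..y, c z| ≤
      exp D * (∫ z in (0:ℝ)..y, |f z - c z|) + kernelDefect B c y := by
  have hyL : Icc 0 y ⊆ Icc 0 L := Icc_subset_Icc_right hy.2
  have hint : ∀ φ : ℝ → ℝ, ContinuousOn φ (Icc 0 L) → IntervalIntegrable φ volume 0 y :=
    fun φ hφ => hφ.intervalIntegrable_of_mem_Icc hy
  have hpoint : ∀ z ∈ Icc 0 y, |exp (-B y) * (exp (B z) * f z) - c z| ≤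
      exp D * |f z - c z| + |exp (B z - B y) - 1| * |c z| := by
    intro z hz
    have hsplit : exp (-B y) * (exp (B z) * f z) - c z =
        exp (B z - B y) * (f z - c z) + (exp (B z - B y) - 1) * c z := by
      rw [exp_sub, exp_neg]; field_simp; ring
    rw [hsplit]
    refine (abs_add_le _ _).trans ?_
    rw [abs_mul, abs_mul, abs_of_pos (exp_pos _)]
    gcongr
    exact hBD y hy z (hyL hz)
  have hcont : ContinuousOn (fun z => exp (-B y) * (exp (B z) * f z)) (Icc 0 L) :=
    continuousOn_const.mul ((continuous_exp.comp hB).continuousOn.mul hf)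
  have hdiff : ContinuousOn (fun z => exp D * |f z - c z|) (Icc 0 L) :=
    continuousOn_const.mul (hf.sub hc.continuousOn).abs
  have hdefect : Continuous fun z => |exp (B z - B y) - 1| * |c z| := by fun_prop
  rw [← intervalIntegral.integral_const_mul,
    ← intervalIntegral.integral_sub (hint _ hcont) (hc.intervalIntegrable _ _),
    ← intervalIntegral.integral_const_mul, kernelDefect,
    ← intervalIntegral.integral_add (hint _ hdiff) (hdefect.intervalIntegrable _ _)]
  refine (intervalIntegral.abs_integral_le_integral_abs hy.1).trans
    (intervalIntegral.integral_mono_on hy.1 ?_ ?_ hpoint)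
  · exact hint _ (hcont.sub hc.continuousOn).abs
  · exact hint _ (hdiff.add hdefect.continuousOn)

theorem continuousOn_exp_neg_mul_integral_exp_mul (hB : Continuous B)
    (hf : ContinuousOn f (Icc 0 L)) (hL : 0 ≤ L) :
    ContinuousOn (fun y => exp (-B y) * ∫ z in (0:ℝ)..y, exp (B z) * f z) (Icc 0 L) := by
  refine (continuous_exp.comp hB.neg).continuousOn.mul ?_
  have := intervalIntegral.continuousOn_primitive_interval (a := 0) (b := L)
    (((continuous_exp.comp hB).continuousOn.mul hf).integrableOn_Icc (μ := volume) |>.mono_set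
      (uIcc_of_le hL).subset)
  rwa [uIcc_of_le hL] at this

theorem abs_sub_le_add_mul_integral_abs_sub (hμ : 0 ≤ μ) (hB : Continuous B)
    (hBD : ∀ y ∈ Icc 0 L, ∀ z ∈ Icc 0 L, B z - B y ≤ D)
    (hf : ContinuousOn f (Icc 0 L)) (hc : Continuous c)
    (hfeq : ∀ x ∈ Icc 0 L, f x = r x + μ * ∫ y in (0:ℝ)..x,
      exp (-B y) * ∫ z in (0:ℝ)..y, exp (B z) * f z)
    (hceq : ∀ x ∈ Icc 0 L, c x = r x + μ * ∫ y in (0:ℝ)..x, ∫ z in (0:ℝ)..y, c z)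
    {x : ℝ} (hx : x ∈ Icc 0 L) :
    |f x - c x| ≤ μ * kernelError B c L + μ * exp D * L * ∫ t in (0:ℝ)..x, |f t - c t| := by
  have hinner := continuousOn_exp_neg_mul_integral_exp_mul hB hf (hx.1.trans hx.2)
  have hprim : Continuous fun y => ∫ z in (0:ℝ)..y, c z :=
    intervalIntegral.continuous_primitive (fun _ _ => hc.intervalIntegrable _ _) 0
  set d := ∫ t in (0:ℝ)..x, |f t - c t|
  have hsub : f x - c x = μ * ∫ y in (0:ℝ)..x,
      (exp (-B y) * (∫ z in (0:ℝ)..y, exp (B z) * f z) - ∫ z in (0:ℝ)..y, c z) := by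
    rw [hfeq x hx, hceq x hx, intervalIntegral.integral_sub
      (hinner.intervalIntegrable_of_mem_Icc hx) (hprim.intervalIntegrable _ _)]
    ring
  have hbound : ∀ y ∈ Icc 0 x, |exp (-B y) * (∫ z in (0:ℝ)..y, exp (B z) * f z) -
      ∫ z in (0:ℝ)..y, c z| ≤ exp D * d + kernelDefect B c y := fun y hy => by
    refine (abs_exp_neg_mul_integral_sub_integral_le hB hBD hf hc ⟨hy.1, hy.2.trans hx.2⟩).trans ?_
    gcongr
    exact intervalIntegral.integral_mono_interval le_rfl hy.1 hy.2
      (ae_of_all _ fun _ => abs_nonneg _)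
      ((hf.sub hc.continuousOn).abs.intervalIntegrable_of_mem_Icc hx)
  have hd : 0 ≤ d := intervalIntegral.integral_nonneg hx.1 fun _ _ => abs_nonneg _
  calc |f x - c x|
      ≤ μ * ∫ y in (0:ℝ)..x, (exp D * d + kernelDefect B c y) := by
        rw [hsub, abs_mul, abs_of_nonneg hμ]
        gcongr
        refine (intervalIntegral.abs_integral_le_integral_abs hx.1).trans
          (intervalIntegral.integral_mono_on hx.1 ?_ ?_ hbound)
        · exact ((hinner.sub (hprim.continuousOn)).abs).intervalIntegrable_of_mem_Icc hx
        · exact (continuous_const.add (continuous_kernelDefect hB hc)).intervalIntegrable _ _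
    _ = μ * (x * (exp D * d) + ∫ y in (0:ℝ)..x, kernelDefect B c y) := by
        rw [intervalIntegral.integral_add intervalIntegrable_const
          ((continuous_kernelDefect hB hc).intervalIntegrable _ _),
          intervalIntegral.integral_const, smul_eq_mul, sub_zero]
    _ ≤ μ * (L * (exp D * d) + kernelError B c L) := by
        gcongr
        · exact hx.2
        · exact kernelDefect_le_kernelError hB hc hx
    _ = μ * kernelError B c L + μ * exp D * L * d := by ring

theorem abs_sub_le_mul_kernelError_mul_exp (hμ : 0 ≤ μ) (hB : Continuous B)
    (hBD : ∀ y ∈ Icc 0 L, ∀ z ∈ Icc 0 L, B z - B y ≤ D)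
    (hf : ContinuousOn f (Icc 0 L)) (hc : Continuous c)
    (hfeq : ∀ x ∈ Icc 0 L, f x = r x + μ * ∫ y in (0:ℝ)..x,
      exp (-B y) * ∫ z in (0:ℝ)..y, exp (B z) * f z)
    (hceq : ∀ x ∈ Icc 0 L, c x = r x + μ * ∫ y in (0:ℝ)..x, ∫ z in (0:ℝ)..y, c z)
    {x : ℝ} (hx : x ∈ Icc 0 L) :
    |f x - c x| ≤ μ * kernelError B c L * exp (μ * exp D * L * x) := by
  have hL : 0 ≤ L := hx.1.trans hx.2
  simpa using le_mul_exp_of_le_add_mul_integral (by positivity) (hf.sub hc.continuousOn).abs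
    (fun _ ht => abs_sub_le_add_mul_integral_abs_sub hμ hB hBD hf hc hfeq hceq ht) x hx

end Volterra

/-- The paper's `𝔞 = 2 ∫₀ˣ b`. Cutting `b` off outside `(0, ∞)` makes `potential b` continuous on
all of `ℝ` as soon as `b` is integrable on `(0, ∞)`. -/
noncomputable def potential (b : ℝ → ℝ) (x : ℝ) : ℝ :=
  2 * ∫ u in (0:ℝ)..x, (Ioi 0).indicator b u

section Potential

variable {b : ℝ → ℝ}

theorem continuous_potential (hb : IntegrableOn b (Ioi 0)) : Continuous (potential b) :=
  continuous_const.mul <| intervalIntegral.continuous_primitive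
    (fun _ _ => (hb.integrable_indicator measurableSet_Ioi).intervalIntegrable) 0

theorem potential_sub_potential (hb : IntegrableOn b (Ioi 0)) {y z : ℝ} (hy : 0 ≤ y)
    (hz : 0 ≤ z) : potential b z - potential b y = 2 * ∫ u in y..z, b u := by
  have hind : ∀ s t, IntervalIntegrable ((Ioi 0).indicator b) volume s t := fun _ _ =>
    (hb.integrable_indicator measurableSet_Ioi).intervalIntegrable
  rw [potential, potential, ← mul_sub,
    intervalIntegral.integral_interval_sub_left (hind 0 z) (hind 0 y)]
  congr 1
  refine intervalIntegral.integral_congr_ae (ae_of_all _ fun u hu => ?_)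
  exact indicator_of_mem ((le_min hy hz).trans_lt hu.1) b

theorem potential_eq_two_mul_integral (hb : IntegrableOn b (Ioi 0)) {x : ℝ} (hx : 0 ≤ x) :
    potential b x = 2 * ∫ u in (0:ℝ)..x, b u := by
  simpa [potential] using potential_sub_potential hb le_rfl hx

theorem abs_potential_sub_potential_le (hb : IntegrableOn b (Ioi 0)) {y z : ℝ} (hy : 0 ≤ y)
    (hz : 0 ≤ z) : |potential b z - potential b y| ≤ 2 * ∫ u in Ioi 0, |b u| := by
  rw [potential_sub_potential hb hy hz, abs_mul, abs_two]
  gcongr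
  have hsub : uIoc y z ⊆ Ioi 0 := fun u hu => (le_min hy hz).trans_lt hu.1
  calc |∫ u in y..z, b u| ≤ ∫ u in uIoc y z, |b u| :=
        intervalIntegral.norm_integral_le_integral_norm_uIoc (f := b)
    _ ≤ ∫ u in Ioi 0, |b u| :=
        setIntegral_mono_set hb.abs (ae_of_all _ fun u => abs_nonneg _) hsub.eventuallyLE

theorem abs_exp_potential_sub_potential_sub_one_le {M : ℝ} (hb : IntegrableOn b (Ioi 0))
    (hbM : ∫ u in Ioi 0, |b u| ≤ M) {y z : ℝ} (hy : 0 ≤ y) (hz : 0 ≤ z) :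
    |exp (potential b z - potential b y) - 1| ≤ exp (2 * M) + 1 := by
  have hle : potential b z - potential b y ≤ 2 * M :=
    (le_abs_self _).trans ((abs_potential_sub_potential_le hb hy hz).trans (by linarith))
  have := exp_le_exp.mpr hle
  have := exp_pos (potential b z - potential b y)
  rw [abs_le]; constructor <;> linarith

theorem integral_exp_potential_eq (f : ℝ → ℝ) (hb : IntegrableOn b (Ioi 0)) {x : ℝ}
    (hx : 0 ≤ x) :
    ∫ y in (0:ℝ)..x, exp (-(2 * ∫ u in (0:ℝ)..y, b u)) *
        ∫ z in (0:ℝ)..y, exp (2 * ∫ u in (0:ℝ)..z, b u) * f z =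
      ∫ y in (0:ℝ)..x, exp (-potential b y) * ∫ z in (0:ℝ)..y, exp (potential b z) * f z := by
  refine intervalIntegral.integral_congr fun y hy => ?_
  rw [uIcc_of_le hx] at hy
  have hz : ∀ z ∈ uIcc 0 y, exp (2 * ∫ u in (0:ℝ)..z, b u) * f z = exp (potential b z) * f z :=
    fun z hz => by
      rw [uIcc_of_le hy.1] at hz
      rw [potential_eq_two_mul_integral hb hz.1]
  simp only [potential_eq_two_mul_integral hb hy.1, intervalIntegral.integral_congr hz]

end Potential

section Limit

variable {ι : Type*} {l : Filter ι} {b : ι → ℝ → ℝ} {c : ℝ → ℝ} {M : ℝ}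

theorem tendsto_potential_sub_potential (hb : ∀ᶠ i in l, IntegrableOn (b i) (Ioi 0))
    (hlim : ∀ y z, 0 < y → y < z → Tendsto (fun i => ∫ u in y..z, b i u) l (𝓝 0))
    {y z : ℝ} (hz : 0 < z) (hzy : z ≤ y) :
    Tendsto (fun i => potential (b i) z - potential (b i) y) l (𝓝 0) := by
  rcases hzy.eq_or_lt with rfl | hzy
  · simpa using tendsto_const_nhds
  · have := (hlim z y hz hzy).const_mul (-2)
    rw [mul_zero] at this
    refine this.congr' (hb.mono fun i hi => ?_)
    dsimp only
    rw [potential_sub_potential hi (hz.le.trans hzy.le) hz.le, intervalIntegral.integral_symm z y]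
    ring

variable [l.IsCountablyGenerated]

theorem tendsto_kernelDefect_potential (hc : Continuous c)
    (hb : ∀ᶠ i in l, IntegrableOn (b i) (Ioi 0) ∧ ∫ u in Ioi 0, |b i u| ≤ M)
    (hlim : ∀ y z, 0 < y → y < z → Tendsto (fun i => ∫ u in y..z, b i u) l (𝓝 0))
    {y : ℝ} (hy : 0 < y) :
    Tendsto (fun i => kernelDefect (potential (b i)) c y) l (𝓝 0) := by
  have h := intervalIntegral.tendsto_integral_filter_of_dominated_convergence
    (l := l) (a := 0) (b := y) (f := fun _ => 0) (μ := volume)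
    (F := fun i z => |exp (potential (b i) z - potential (b i) y) - 1| * |c z|)
    (fun z => (exp (2 * M) + 1) * |c z|) ?_ ?_ ?_ ?_
  · simpa [kernelDefect] using h
  · filter_upwards [hb] with i hi
    have := continuous_potential hi.1
    exact Continuous.aestronglyMeasurable (by fun_prop)
  · filter_upwards [hb] with i hi
    refine ae_of_all _ fun z hz => ?_
    rw [uIoc_of_le hy.le] at hz
    rw [Real.norm_eq_abs, abs_mul, abs_abs, abs_abs]
    gcongr
    exact abs_exp_potential_sub_potential_sub_one_le hi.1 hi.2 hy.le hz.1.le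
  · exact (continuous_const.mul hc.abs).intervalIntegrable _ _
  · refine ae_of_all _ fun z hz => ?_
    rw [uIoc_of_le hy.le] at hz
    have hcont : Continuous fun t : ℝ => |exp t - 1| * |c z| := by fun_prop
    simpa [Function.comp_def] using (hcont.tendsto 0).comp
      (tendsto_potential_sub_potential (hb.mono fun _ hi => hi.1) hlim hz.1 hz.2)

theorem tendsto_kernelError_potential {L : ℝ} (hL : 0 ≤ L) (hc : Continuous c)
    (hb : ∀ᶠ i in l, IntegrableOn (b i) (Ioi 0) ∧ ∫ u in Ioi 0, |b i u| ≤ M)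
    (hlim : ∀ y z, 0 < y → y < z → Tendsto (fun i => ∫ u in y..z, b i u) l (𝓝 0)) :
    Tendsto (fun i => kernelError (potential (b i)) c L) l (𝓝 0) := by
  have h := intervalIntegral.tendsto_integral_filter_of_dominated_convergence
    (l := l) (a := 0) (b := L) (f := fun _ => 0) (μ := volume)
    (F := fun i y => kernelDefect (potential (b i)) c y)
    (fun _ => ∫ z in (0:ℝ)..L, (exp (2 * M) + 1) * |c z|) ?_ ?_ intervalIntegrable_const ?_
  · simpa [kernelError] using h
  · filter_upwards [hb] with i hi
    exact (continuous_kernelDefect (continuous_potential hi.1) hc).aestronglyMeasurable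
  · filter_upwards [hb] with i hi
    refine ae_of_all _ fun y hy => ?_
    rw [uIoc_of_le hL] at hy
    have hbound : Continuous fun z => (exp (2 * M) + 1) * |c z| := by fun_prop
    rw [Real.norm_eq_abs, kernelDefect]
    refine (intervalIntegral.abs_integral_le_integral_abs hy.1.le).trans
      ((intervalIntegral.integral_mono_on hy.1.le ?_ (hbound.intervalIntegrable _ _) ?_).trans
        (intervalIntegral.integral_mono_interval le_rfl hy.1.le hy.2
          (ae_of_all _ fun _ => by positivity) (hbound.intervalIntegrable _ _)))
    · have := continuous_potential hi.1
      exact Continuous.intervalIntegrable (by fun_prop) _ _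
    · intro z hz
      rw [abs_of_nonneg (by positivity)]
      gcongr
      exact abs_exp_potential_sub_potential_sub_one_le hi.1 hi.2 hy.1.le hz.1
  · refine ae_of_all _ fun y hy => ?_
    rw [uIoc_of_le hL] at hy
    exact tendsto_kernelDefect_potential hc hb hlim hy.1

end Limit

theorem abs_sub_cosh_le {lam M L : ℝ} (hlam : 0 ≤ lam) {b f : ℝ → ℝ}
    (hb : IntegrableOn b (Ioi 0)) (hbM : ∫ u in Ioi 0, |b u| ≤ M) (hf : ContinuousOn f (Ici 0))
    (hfeq : ∀ x ≥ (0:ℝ), f x = 1 + 2 * lam * ∫ y in (0:ℝ)..x,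
      exp (-(2 * ∫ u in (0:ℝ)..y, b u)) * ∫ z in (0:ℝ)..y, exp (2 * ∫ u in (0:ℝ)..z, b u) * f z)
    {x : ℝ} (hx : x ∈ Icc 0 L) :
    |f x - cosh (√(2 * lam) * x)| ≤
      2 * lam * kernelError (potential b) (fun z => cosh (√(2 * lam) * z)) L *
        exp (2 * lam * exp (2 * M) * L * L) := by
  refine (abs_sub_le_mul_kernelError_mul_exp (r := fun _ => 1) (μ := 2 * lam) (D := 2 * M)
    (c := fun z => cosh (√(2 * lam) * z)) (by positivity)
    (continuous_potential hb) (fun y hy z hz => ?_) (hf.mono Icc_subset_Ici_self) (by fun_prop)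
    (fun x hx => ?_) (fun x _ => ?_) hx).trans ?_
  · exact (le_abs_self _).trans
      ((abs_potential_sub_potential_le hb hy.1 hz.1).trans (by linarith))
  · rw [hfeq x hx.1, integral_exp_potential_eq f hb hx.1]
  · rw [cosh_mul_eq_one_add_sq_mul_integral_integral, sq_sqrt (by positivity)]
  · have hE : 0 ≤ kernelError (potential b) (fun z => cosh (√(2 * lam) * z)) L :=
      intervalIntegral.integral_nonneg (hx.1.trans hx.2) fun y hy => kernelDefect_nonneg hy.1
    have hL : 0 ≤ L := hx.1.trans hx.2
    gcongr
    exact hx.2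

theorem stmt15_general (lam α M : ℝ) (hlam : 0 < lam)
    (a : ℝ → ℝ → ℝ)
    (haint : ∀ ε > (0:ℝ), IntegrableOn (a ε) (Ioi 0))
    (haM : ∀ ε > (0:ℝ), ∫ x in Ioi (0:ℝ), |a ε x| ≤ M)
    (hlim : ∀ y z : ℝ, 0 ≤ y → y < z →
      Tendsto (fun ε => ∫ u in y..z, a ε u) (𝓝[>] (0:ℝ))
        (𝓝 (α * (if y = 0 then 1 else 0))))
    (j : ℝ → ℝ → ℝ)
    (hjcont : ∀ ε > (0:ℝ), ContinuousOn (j ε) (Ici 0))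
    (hjeq : ∀ ε > (0:ℝ), ∀ x ≥ (0:ℝ),
      j ε x = 1 + 2 * lam * ∫ y in (0:ℝ)..x,
        Real.exp (-(2 * ∫ u in (0:ℝ)..y, a ε u)) *
          ∫ z in (0:ℝ)..y, Real.exp (2 * ∫ u in (0:ℝ)..z, a ε u) * j ε z) :
    ∀ Kc : Set ℝ, Kc ⊆ Ici 0 → IsCompact Kc →
      TendstoUniformlyOn (fun ε x => j ε x)
        (fun x => Real.cosh (Real.sqrt (2 * lam) * x)) (𝓝[>] (0:ℝ)) Kc := by
  intro Kc hKsub hKc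
  obtain ⟨L, hL⟩ := hKc.bddAbove
  have hKL : Kc ⊆ Icc 0 (max L 0) := fun x hx => ⟨hKsub hx, (hL hx).trans (le_max_left _ _)⟩
  have hpos : ∀ᶠ ε in 𝓝[>] (0:ℝ), 0 < ε := self_mem_nhdsWithin
  have herror := tendsto_kernelError_potential (le_max_right L 0)
    (c := fun z => cosh (√(2 * lam) * z)) (by fun_prop)
    (hpos.mono fun ε hε => ⟨haint ε hε, haM ε hε⟩)
    (fun y z hy hyz => by simpa [hy.ne'] using hlim y z hy.le hyz)
  have htend := (herror.const_mul (2 * lam)).mul_const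
    (exp (2 * lam * exp (2 * M) * max L 0 * max L 0))
  rw [mul_zero, zero_mul] at htend
  rw [Metric.tendstoUniformlyOn_iff]
  intro δ hδ
  filter_upwards [htend (Iio_mem_nhds hδ), hpos] with ε hεδ hε x hx
  rw [dist_comm, Real.dist_eq]
  exact (abs_sub_cosh_le hlam.le (haint ε hε) (haM ε hε) (hjcont ε hε) (hjeq ε hε)
    (hKL hx)).trans_lt hεδ

/-- the solutions `j_ε` of the integral equation
`j_ε(x) = 1 + 2λ∫_0^x e^{−𝔞_ε(y)}∫_0^y e^{𝔞_ε(z)} j_ε(z) dz dy`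
(equivalently, of `(1/2)j'' + a_ε j' = λj`, `j(0)=1`, `j'(0)=0`) converge, as `ε → 0+`,
to `x ↦ cosh(√(2λ)x)` uniformly on every compact subset of `[0,∞)`. -/
theorem stmt15 (lam α M : ℝ) (hlam : 0 < lam)
    (a : ℝ → ℝ → ℝ)
    (hacont : ∀ ε > (0:ℝ), ContinuousOn (a ε) (Ici 0))
    (haint : ∀ ε > (0:ℝ), IntegrableOn (a ε) (Ioi 0))
    (haM : ∀ ε > (0:ℝ), ∫ x in Ioi (0:ℝ), |a ε x| ≤ M)
    (hlim : ∀ y z : ℝ, 0 ≤ y → y < z →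
      Tendsto (fun ε => ∫ u in y..z, a ε u) (𝓝[>] (0:ℝ))
        (𝓝 (α * (if y = 0 then 1 else 0))))
    (j : ℝ → ℝ → ℝ)
    (hjcont : ∀ ε > (0:ℝ), ContinuousOn (j ε) (Ici 0))
    (hjeq : ∀ ε > (0:ℝ), ∀ x ≥ (0:ℝ),
      j ε x = 1 + 2 * lam * ∫ y in (0:ℝ)..x,
        Real.exp (-(2 * ∫ u in (0:ℝ)..y, a ε u)) *
          ∫ z in (0:ℝ)..y, Real.exp (2 * ∫ u in (0:ℝ)..z, a ε u) * j ε z) :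
    ∀ Kc : Set ℝ, Kc ⊆ Ici 0 → IsCompact Kc →
      TendstoUniformlyOn (fun ε x => j ε x)
        (fun x => Real.cosh (Real.sqrt (2 * lam) * x)) (𝓝[>] (0:ℝ)) Kc :=
  stmt15_general lam α M hlam a haint haM hlim j hjcont hjeq
end
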